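/- For the surrogate counting procedure applied to a neighbor list: let G be a finite simple graph with degree-based ordering ≺, let V_i ⊆ V, and let v be any vertex. Then Σ_{u ∈ N_v ∩ V_i} |N_u ∩ N_v| equals the number of triangles {v, u, w} of G with v ≺ u ≺ w and u ∈ V_i. -/
import Mathlib


/-- Degree-based ordering: `u ≺ v` iff `deg u < deg v`, or degrees equal and `u < v`. -/
def degPrec {V : Type*} [Fintype V] [LinearOrder V] (G : SimpleGraph V) [DecidableRel G.Adj]
    (u v : V) : Prop :=
  G.degree u < G.degree v ∨ (G.degree u = G.degree v ∧ u < v)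

instance {V : Type*} [Fintype V] [LinearOrder V] (G : SimpleGraph V) [DecidableRel G.Adj] :
    DecidableRel (degPrec G) := fun u v => by unfold degPrec; infer_instance

/-- `N_v`: the neighbors of `v` that come after `v` in the degree-based ordering. -/
def Nout {V : Type*} [Fintype V] [LinearOrder V] (G : SimpleGraph V) [DecidableRel G.Adj]
    (v : V) : Finset V :=
  (G.neighborFinset v).filter (fun u => degPrec G v u)

section Aux
variable {V : Type*} [Fintype V] [LinearOrder V] (G : SimpleGraph V) [DecidableRel G.Adj]

lemma degPrec_irrefl (v : V) : ¬ degPrec G v v := by simp [degPrec]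

lemma degPrec_trans {a b c : V} (h1 : degPrec G a b) (h2 : degPrec G b c) :
    degPrec G a c := by
  rcases h1 with h | ⟨h, h'⟩ <;> rcases h2 with g | ⟨g, g'⟩ <;>
    first
    | exact Or.inl (by omega)
    | exact Or.inr ⟨by omega, lt_trans h' g'⟩

lemma degPrec_ne {a b : V} (h : degPrec G a b) : a ≠ b := by
  rintro rfl; exact degPrec_irrefl G a h

lemma degPrec_asymm {a b : V} (h : degPrec G a b) : ¬ degPrec G b a := fun h' =>
  degPrec_irrefl G a (degPrec_trans G h h')

lemma mem_Nout {v u : V} : u ∈ Nout G v ↔ G.Adj v u ∧ degPrec G v u := by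
  simp [Nout]

end Aux

open scoped Classical in
/-- Surrogate counting: `∑_{u ∈ N_v ∩ V_i} |N_u ∩ N_v|` equals the number of triangles
`{v, u, w}` of `G` with `v ≺ u ≺ w` and `u ∈ V_i`. -/
theorem surrogate_count_correct {V : Type*} [Fintype V] [LinearOrder V]
    (G : SimpleGraph V) [DecidableRel G.Adj] (Vi : Finset V) (v : V) :
    ∑ u ∈ Nout G v ∩ Vi, (Nout G u ∩ Nout G v).card
      = ((G.cliqueFinset 3).filter (fun t => ∃ u ∈ Vi, ∃ w : V,
          t = ({v, u, w} : Finset V) ∧ degPrec G v u ∧ degPrec G u w)).card := by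
  classical
  rw [← Finset.card_sigma]
  apply Finset.card_bij (fun x _ => ({v, x.1, x.2} : Finset V))
  · rintro ⟨u, w⟩ hx
    rw [Finset.mem_sigma] at hx
    obtain ⟨hu, hw⟩ := hx
    rw [Finset.mem_inter, mem_Nout] at hu; rw [Finset.mem_inter, mem_Nout, mem_Nout] at hw
    obtain ⟨⟨hvu, hpvu⟩, huVi⟩ := hu
    obtain ⟨⟨huw, hpuw⟩, hvw, hpvw⟩ := hw
    simp only [Finset.mem_filter, SimpleGraph.mem_cliqueFinset_iff]
    refine ⟨SimpleGraph.is3Clique_triple_iff.mpr ⟨hvu, hvw, huw⟩,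
      u, huVi, w, rfl, hpvu, hpuw⟩
  · rintro ⟨u, w⟩ hx ⟨u', w'⟩ hx' h
    rw [Finset.mem_sigma] at hx hx'
    obtain ⟨hu, hw⟩ := hx
    obtain ⟨hu', hw'⟩ := hx'
    rw [Finset.mem_inter, mem_Nout] at hu hu'; rw [Finset.mem_inter, mem_Nout, mem_Nout] at hw hw'
    have hpvu := hu.1.2
    have hpuw := hw.1.2
    have hpvu' := hu'.1.2
    have hpuw' := hw'.1.2
    have huw : u ≠ w := degPrec_ne G hpuw
    have hvu : v ≠ u := degPrec_ne G hpvu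
    have hvw : v ≠ w := degPrec_ne G (degPrec_trans G hpvu hpuw)
    have hu'w' : u' ≠ w' := degPrec_ne G hpuw'
    have hvu' : v ≠ u' := degPrec_ne G hpvu'
    have hvw' : v ≠ w' := degPrec_ne G (degPrec_trans G hpvu' hpuw')
    have hu'' : u' ∈ ({v, u, w} : Finset V) := by rw [h]; simp
    have hw'' : w' ∈ ({v, u, w} : Finset V) := by rw [h]; simp
    simp only [Finset.mem_insert, Finset.mem_singleton] at hu'' hw''
    rcases hu'' with rfl | rfl | rfl
    · exact absurd rfl hvu'
    · rcases hw'' with rfl | rfl | rfl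
      · exact absurd rfl hvw'
      · exact absurd rfl hu'w'
      · rfl
    · rcases hw'' with rfl | rfl | rfl
      · exact absurd rfl hvw'
      · exact absurd hpuw (degPrec_asymm G hpuw')
      · exact absurd rfl hu'w'
  · intro t ht
    simp only [Finset.mem_filter, SimpleGraph.mem_cliqueFinset_iff] at ht
    obtain ⟨hclique, u, huVi, w, rfl, hpvu, hpuw⟩ := ht
    have hadj := SimpleGraph.is3Clique_triple_iff.mp hclique
    refine ⟨⟨u, w⟩, ?_, rfl⟩
    rw [Finset.mem_sigma, Finset.mem_inter, Finset.mem_inter, mem_Nout, mem_Nout, mem_Nout]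
    exact ⟨⟨⟨hadj.1, hpvu⟩, huVi⟩, ⟨hadj.2.2, hpuw⟩, hadj.2.1,
      degPrec_trans G hpvu hpuw⟩
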